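/- arXiv:1004.4015 — 3 statements merged into one kernel-verified Lean document; each statement's English description precedes it below -/
import Mathlib

section
/- Let k > 1 and let ψ : (0,1) → [0,∞) be such that √(ψ(x)/x^k) is weakly differentiable on (0,1) with ∫₀¹ x^k |(√(ψ/x^k))'(x)|² dx < ∞ and ∫₀¹ ψ(x) dx < ∞. Then there exists a constant C (depending only on k) such that ∫₀¹ ψ(x)/x² dx ≤ C ( ∫₀¹ x^k |(√(ψ(x)/x^k))'|² dx + ∫₀¹ ψ(x) dx ). -/
open MeasureTheory Set
open scoped NNReal ENNReal

set_option maxHeartbeats 1600000 in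
theorem hardy_k_gt_one (k : ℝ) (hk : 1 < k) :
    ∃ C : ℝ≥0, 0 < C ∧ ∀ (ψ h' : ℝ → ℝ),
      (∀ x ∈ Ioo (0:ℝ) 1, 0 ≤ ψ x) →
      (∀ x ∈ Ioo (0:ℝ) 1, HasDerivAt (fun y : ℝ => Real.sqrt (ψ y / y ^ k)) (h' x) x) →
      (∫⁻ x in Ioo (0:ℝ) 1, ENNReal.ofReal (x ^ k * (h' x) ^ 2)) < ⊤ →
      (∫⁻ x in Ioo (0:ℝ) 1, ENNReal.ofReal (ψ x)) < ⊤ →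
      (∫⁻ x in Ioo (0:ℝ) 1, ENNReal.ofReal (ψ x / x ^ 2)) ≤
        (C : ℝ≥0∞) * ((∫⁻ x in Ioo (0:ℝ) 1, ENNReal.ofReal (x ^ k * (h' x) ^ 2)) +
             (∫⁻ x in Ioo (0:ℝ) 1, ENNReal.ofReal (ψ x))) := by
  have hk1 : (0:ℝ) < k - 1 := by linarith
  set Cr : ℝ := 16 / (k-1) + 4 / (k-1)^2 + 4 with hCrdef
  have hCrpos : 0 < Cr := by positivity
  refine ⟨Real.toNNReal Cr, Real.toNNReal_pos.mpr hCrpos, ?_⟩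
  intro ψ h' hψ0 hderiv hI1 hI2
  set g : ℝ → ℝ := fun y => Real.sqrt (ψ y / y ^ k) with hgdef
  -- basic facts
  have hxk : ∀ x ∈ Ioo (0:ℝ) 1, (0:ℝ) < x ^ k := fun x hx => Real.rpow_pos_of_pos hx.1 k
  have hψ_eq : ∀ x ∈ Ioo (0:ℝ) 1, ψ x = x ^ k * g x ^ 2 := by
    intro x hx
    have h1 : g x ^ 2 = ψ x / x ^ k :=
      Real.sq_sqrt (div_nonneg (hψ0 x hx) (hxk x hx).le)
    rw [h1]
    field_simp
    rw [mul_comm, mul_div_assoc, ← mul_div_assoc, mul_div_cancel_left₀ _ (hxk x hx).ne']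
  have hgcont : ContinuousOn g (Ioo (0:ℝ) 1) := fun x hx =>
    ((hderiv x hx).continuousAt).continuousWithinAt
  have hψcont : ContinuousOn ψ (Ioo (0:ℝ) 1) := by
    have hc : ContinuousOn (fun x : ℝ => x ^ k * g x ^ 2) (Ioo (0:ℝ) 1) := by
      intro x hx
      exact ((Real.continuousAt_rpow_const x k (Or.inl hx.1.ne')).continuousWithinAt).mul
        ((hgcont x hx).pow 2)
    exact hc.congr fun x hx => hψ_eq x hx
  have hψmeas : AEMeasurable ψ (volume.restrict (Ioo (0:ℝ) 1)) :=
    hψcont.aemeasurable measurableSet_Ioo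
  have hφcont : ContinuousOn (fun x : ℝ => ψ x / x ^ 2) (Ioo (0:ℝ) 1) :=
    hψcont.div ((continuous_pow 2).continuousOn) fun x hx => pow_ne_zero 2 hx.1.ne'
  have hφmeas : AEMeasurable (fun x : ℝ => ENNReal.ofReal (ψ x / x ^ 2))
      (volume.restrict (Ioo (0:ℝ) 1)) :=
    (hφcont.aemeasurable measurableSet_Ioo).ennreal_ofReal
  by_cases hS0 : (∫⁻ x in Ioo (0:ℝ) 1, ENNReal.ofReal (ψ x)) = 0
  · -- degenerate case: ψ = 0 a.e.
    have h0 : (fun x => ENNReal.ofReal (ψ x)) =ᵐ[volume.restrict (Ioo (0:ℝ) 1)] 0 :=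
      (lintegral_eq_zero_iff' hψmeas.ennreal_ofReal).mp hS0
    have h0' : (fun x => ENNReal.ofReal (ψ x / x ^ 2)) =ᵐ[volume.restrict (Ioo (0:ℝ) 1)] 0 := by
      filter_upwards [h0, ae_restrict_mem measurableSet_Ioo] with x hx hx'
      have h1 : ψ x ≤ 0 := by simpa [ENNReal.ofReal_eq_zero] using hx
      have h2 : ψ x = 0 := le_antisymm h1 (hψ0 x hx')
      simp [h2]
    calc (∫⁻ x in Ioo (0:ℝ) 1, ENNReal.ofReal (ψ x / x ^ 2)) = 0 := by
            rw [lintegral_congr_ae h0']; simp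
      _ ≤ _ := zero_le
  -- main case
  set S : ℝ := (∫⁻ x in Ioo (0:ℝ) 1, ENNReal.ofReal (ψ x)).toReal with hSdef
  set D : ℝ := (∫⁻ x in Ioo (0:ℝ) 1, ENNReal.ofReal (x ^ k * (h' x) ^ 2)).toReal with hDdef
  have hSpos : 0 < S := ENNReal.toReal_pos hS0 hI2.ne
  have hD0 : 0 ≤ D := ENNReal.toReal_nonneg
  have hI2eq : (∫⁻ x in Ioo (0:ℝ) 1, ENNReal.ofReal (ψ x)) = ENNReal.ofReal S :=
    (ENNReal.ofReal_toReal hI2.ne).symm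
  have hI1eq : (∫⁻ x in Ioo (0:ℝ) 1, ENNReal.ofReal (x ^ k * (h' x) ^ 2)) = ENNReal.ofReal D :=
    (ENNReal.ofReal_toReal hI1.ne).symm
  -- choose a good point a
  have ha : ∃ a ∈ Ioo (1/2:ℝ) 1, ψ a ≤ 4 * S := by
    by_contra hcon
    push_neg at hcon
    have h1 : ENNReal.ofReal (4 * S) * volume (Ioo (1/2:ℝ) 1)
        ≤ ∫⁻ x in Ioo (1/2:ℝ) 1, ENNReal.ofReal (ψ x) := by
      rw [← setLIntegral_const]
      exact setLIntegral_mono' measurableSet_Ioo fun x hx =>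
        ENNReal.ofReal_le_ofReal (hcon x hx).le
    have h2 : (∫⁻ x in Ioo (1/2:ℝ) 1, ENNReal.ofReal (ψ x)) ≤ ENNReal.ofReal S := by
      rw [← hI2eq]
      exact lintegral_mono_set fun x hx => ⟨by linarith [hx.1, hx.2], hx.2⟩
    have hvol : volume (Ioo (1/2:ℝ) 1) = ENNReal.ofReal (1/2) := by
      rw [Real.volume_Ioo]; norm_num
    rw [hvol, ← ENNReal.ofReal_mul (by positivity)] at h1
    have h3 := le_trans h1 h2
    rw [ENNReal.ofReal_le_ofReal_iff hSpos.le] at h3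
    linarith
  obtain ⟨a, haI, haψ⟩ := ha
  have ha0 : (0:ℝ) < a := by linarith [haI.1]
  have ha1 : a < 1 := haI.2
  have haIoo : a ∈ Ioo (0:ℝ) 1 := ⟨ha0, ha1⟩
  -- bound on the boundary term
  have hFa : a ^ (k-1) * g a ^ 2 ≤ 8 * S := by
    have h1 : g a ^ 2 = ψ a / a ^ k :=
      Real.sq_sqrt (div_nonneg (hψ0 a haIoo) (hxk a haIoo).le)
    have hak : a ^ (k-1) * a = a ^ k := by
      have h2 := Real.rpow_add ha0 (k-1) 1
      rw [Real.rpow_one] at h2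
      rw [← h2]
      congr 1
      ring
    have hA : (0:ℝ) < a ^ (k-1) := Real.rpow_pos_of_pos ha0 _
    have h2 : a ^ (k-1) * (ψ a / a ^ k) = ψ a / a := by
      rw [← hak]
      field_simp
    rw [h1, h2, div_le_iff₀ ha0]
    nlinarith [haI.1, hSpos]
  -- measurability of h'
  have hh'meas : ∀ s : Set ℝ, MeasurableSet s → s ⊆ Ioo (0:ℝ) 1 →
      AEMeasurable h' (volume.restrict s) := by
    intro s hs hsub
    have h1 : ∀ᵐ x ∂volume.restrict s, deriv g x = h' x := by
      filter_upwards [ae_restrict_mem hs] with x hx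
      exact (hderiv x (hsub hx)).deriv
    exact (measurable_deriv g).aemeasurable.congr h1
  have hsubIoc : ∀ ε : ℝ, 0 < ε → Ioc ε a ⊆ Ioo (0:ℝ) 1 := fun ε hε x hx =>
    ⟨lt_trans hε hx.1, lt_of_le_of_lt hx.2 ha1⟩
  -- measurability and integrability of the weighted derivative square
  have hPmeas : ∀ ε : ℝ, 0 < ε →
      AEMeasurable (fun y : ℝ => y ^ k * h' y ^ 2) (volume.restrict (Ioc ε a)) := by
    intro ε hε
    exact ((measurable_id.pow_const k).aemeasurable).mul
      ((hh'meas _ measurableSet_Ioc (hsubIoc ε hε)).pow_const 2)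
  have hPint : ∀ ε : ℝ, 0 < ε → IntegrableOn (fun y : ℝ => y ^ k * h' y ^ 2) (Ioc ε a) := by
    intro ε hε
    refine ⟨(hPmeas ε hε).aestronglyMeasurable, ?_⟩
    rw [hasFiniteIntegral_iff_ofReal ?_]
    · calc (∫⁻ y in Ioc ε a, ENNReal.ofReal (y ^ k * h' y ^ 2))
          ≤ ∫⁻ y in Ioo (0:ℝ) 1, ENNReal.ofReal (y ^ k * h' y ^ 2) :=
            lintegral_mono_set (hsubIoc ε hε)
        _ < ⊤ := hI1
    · filter_upwards [ae_restrict_mem measurableSet_Ioc] with y hy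
      have : (0:ℝ) < y := lt_trans hε hy.1
      positivity
  have hPle : ∀ ε : ℝ, 0 < ε → (∫ y in Ioc ε a, y ^ k * h' y ^ 2) ≤ D := by
    intro ε hε
    rw [integral_eq_lintegral_of_nonneg_ae ?_ (hPmeas ε hε).aestronglyMeasurable]
    · exact ENNReal.toReal_mono hI1.ne (lintegral_mono_set (hsubIoc ε hε))
    · filter_upwards [ae_restrict_mem measurableSet_Ioc] with y hy
      have : (0:ℝ) < y := lt_trans hε hy.1
      positivity
  -- key interval estimate
  have keyIoc : ∀ ε ∈ Ioo (0:ℝ) a, (∫⁻ y in Ioc ε a, ENNReal.ofReal (ψ y / y ^ 2))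
      ≤ ENNReal.ofReal (16*S/(k-1) + 4*D/(k-1)^2) := by
    intro ε hε
    have hε0 : (0:ℝ) < ε := hε.1
    have hεa : ε < a := hε.2
    have hsubIcc : Icc ε a ⊆ Ioo (0:ℝ) 1 := fun x hx =>
      ⟨lt_of_lt_of_le hε0 hx.1, lt_of_le_of_lt hx.2 ha1⟩
    set F' : ℝ → ℝ := fun x => (k-1) * x ^ (k-2) * g x ^ 2 + x ^ (k-1) * (2 * g x * h' x)
      with hF'def
    -- derivative
    have hF : ∀ x ∈ Icc ε a, HasDerivAt (fun y : ℝ => y ^ (k-1) * g y ^ 2) (F' x) x := by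
      intro x hx
      have hx' := hsubIcc hx
      have h1 : HasDerivAt (fun y : ℝ => y ^ (k-1)) ((k-1) * x ^ (k-2)) x := by
        have h := Real.hasDerivAt_rpow_const (x := x) (p := k-1) (Or.inl hx'.1.ne')
        have he : k - 1 - 1 = k - 2 := by ring
        rwa [he] at h
      have h2 : HasDerivAt (fun y : ℝ => g y ^ 2) (2 * g x * h' x) x := by
        have h := (hderiv x hx').pow 2
        norm_num at h
        exact h
      exact h1.mul h2
    -- integrability of F'
    have hcont1 : ContinuousOn (fun x : ℝ => (k-1) * x ^ (k-2) * g x ^ 2) (Icc ε a) := by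
      intro x hx
      have hx' := hsubIcc hx
      exact ((continuousAt_const.mul
        (Real.continuousAt_rpow_const x (k-2) (Or.inl hx'.1.ne'))).continuousWithinAt).mul
        (((hgcont x hx').mono (hsubIcc)).pow 2)
    have hint1 : IntegrableOn (fun x : ℝ => (k-1) * x ^ (k-2) * g x ^ 2) (Ioc ε a) :=
      (hcont1.integrableOn_Icc).mono_set Ioc_subset_Icc_self
    have hh'sq_int : IntegrableOn (fun y : ℝ => h' y ^ 2) (Ioc ε a) := by
      have hεk : (0:ℝ) < ε ^ k := Real.rpow_pos_of_pos hε0 k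
      refine ⟨((hh'meas _ measurableSet_Ioc (hsubIoc ε hε0)).pow_const 2).aestronglyMeasurable, ?_⟩
      rw [hasFiniteIntegral_iff_ofReal (ae_of_all _ fun y => sq_nonneg _)]
      calc (∫⁻ y in Ioc ε a, ENNReal.ofReal (h' y ^ 2))
          ≤ ∫⁻ y in Ioc ε a, ENNReal.ofReal ((ε ^ k)⁻¹ * (y ^ k * h' y ^ 2)) := by
            apply setLIntegral_mono' measurableSet_Ioc
            intro y hy
            apply ENNReal.ofReal_le_ofReal
            have hεy : ε ^ k ≤ y ^ k := Real.rpow_le_rpow hε0.le hy.1.le (by linarith)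
            have hinv : ε ^ k * (ε ^ k)⁻¹ = 1 := mul_inv_cancel₀ hεk.ne'
            nlinarith [mul_le_mul_of_nonneg_right hεy (sq_nonneg (h' y)),
              inv_nonneg.mpr hεk.le]
        _ = ENNReal.ofReal ((ε ^ k)⁻¹) * ∫⁻ y in Ioc ε a, ENNReal.ofReal (y ^ k * h' y ^ 2) := by
            rw [← lintegral_const_mul' _ _ ENNReal.ofReal_ne_top]
            apply lintegral_congr_ae
            filter_upwards [ae_restrict_mem measurableSet_Ioc] with y hy
            rw [← ENNReal.ofReal_mul (inv_nonneg.mpr hεk.le)]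
        _ ≤ ENNReal.ofReal ((ε ^ k)⁻¹) * ∫⁻ y in Ioo (0:ℝ) 1, ENNReal.ofReal (y ^ k * h' y ^ 2) :=
            mul_le_mul_right (lintegral_mono_set (hsubIoc ε hε0)) _
        _ < ⊤ := ENNReal.mul_lt_top ENNReal.ofReal_lt_top hI1
    have hprod_int : IntegrableOn (fun x : ℝ => x ^ (k-1) * (2 * g x * h' x)) (Ioc ε a) := by
      have hcont2 : ContinuousOn (fun x : ℝ => x ^ (k-1) * (2 * g x)) (Icc ε a) := by
        intro x hx
        have hx' := hsubIcc hx
        exact ((Real.continuousAt_rpow_const x (k-1) (Or.inl hx'.1.ne')).continuousWithinAt).mul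
          (continuousWithinAt_const.mul ((hgcont x hx').mono hsubIcc))
      obtain ⟨c, hc⟩ := isCompact_Icc.exists_bound_of_continuousOn hcont2
      have hc0 : 0 ≤ c := le_trans (norm_nonneg _) (hc ε ⟨le_refl _, hεa.le⟩)
      have hGint : Integrable (fun y : ℝ => c * (1 + h' y ^ 2))
          (volume.restrict (Ioc ε a)) := by
        refine Integrable.const_mul ?_ c
        exact (integrable_const 1).add hh'sq_int
      refine Integrable.mono' hGint ?_ ?_
      · exact (((measurable_id.pow_const (k-1)).aemeasurable).mul
          ((aemeasurable_const.mul
            ((hgcont.mono fun x hx => hsubIoc ε hε0 hx).aemeasurable measurableSet_Ioc)).mul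
            (hh'meas _ measurableSet_Ioc (hsubIoc ε hε0)))).aestronglyMeasurable
      · filter_upwards [ae_restrict_mem measurableSet_Ioc] with x hx
        have hx' : x ∈ Icc ε a := Ioc_subset_Icc_self hx
        have h1 : x ^ (k-1) * (2 * g x * h' x) = (x ^ (k-1) * (2 * g x)) * h' x := by ring
        rw [Real.norm_eq_abs, h1, abs_mul]
        have h2 : |x ^ (k-1) * (2 * g x)| ≤ c := by
          rw [← Real.norm_eq_abs]; exact hc x hx'
        have h3 : |h' x| ≤ 1 + h' x ^ 2 := by
          nlinarith [sq_abs (h' x), abs_nonneg (h' x), sq_nonneg (|h' x| - 1)]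
        calc |x ^ (k-1) * (2 * g x)| * |h' x| ≤ c * |h' x| :=
              mul_le_mul_of_nonneg_right h2 (abs_nonneg _)
          _ ≤ c * (1 + h' x ^ 2) := mul_le_mul_of_nonneg_left h3 hc0
    have hF'int : IntegrableOn F' (Ioc ε a) := hint1.add hprod_int
    -- FTC
    have hFTC : (∫ y in Ioc ε a, F' y)
        = a ^ (k-1) * g a ^ 2 - ε ^ (k-1) * g ε ^ 2 := by
      rw [← intervalIntegral.integral_of_le hεa.le]
      exact intervalIntegral.integral_eq_sub_of_hasDerivAt
        (by rw [uIcc_of_le hεa.le]; exact hF)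
        ((intervalIntegrable_iff_integrableOn_Ioc_of_le hεa.le).mpr hF'int)
    -- pointwise inequality
    have hpoint : ∀ y ∈ Ioc ε a,
        ψ y / y ^ 2 ≤ (2/(k-1)) * F' y + (4/(k-1)^2) * (y ^ k * h' y ^ 2) := by
      intro y hy
      have hy' : y ∈ Ioo (0:ℝ) 1 := hsubIoc ε hε0 hy
      have hy0 : (0:ℝ) < y := hy'.1
      have hu : (0:ℝ) < y ^ (k-2) := Real.rpow_pos_of_pos hy0 _
      have hpsi : ψ y / y ^ 2 = y ^ (k-2) * g y ^ 2 := by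
        rw [hψ_eq y hy']
        have hyk : y ^ k = y ^ (k-2) * y ^ (2:ℕ) := by
          rw [← Real.rpow_natCast y 2, ← Real.rpow_add hy0]
          congr 1
          push_cast
          ring
        rw [hyk]
        field_simp
      have hw2 : (y ^ (k-1)) ^ (2:ℕ) = y ^ (k-2) * y ^ k := by
        rw [← Real.rpow_natCast (y ^ (k-1)) 2, ← Real.rpow_mul hy0.le, ← Real.rpow_add hy0]
        congr 1
        push_cast
        ring
      have hE : 0 ≤ (k-1)^2 * (y ^ (k-2) * g y ^ 2) + 4*(k-1) * (y ^ (k-1) * (g y * h' y))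
          + 4 * (y ^ k * h' y ^ 2) := by
        have hQ : 0 ≤ ((k-1) * y ^ (k-2) * g y + 2 * y ^ (k-1) * h' y) ^ 2 := sq_nonneg _
        have hUE : y ^ (k-2) * ((k-1)^2 * (y ^ (k-2) * g y ^ 2)
            + 4*(k-1) * (y ^ (k-1) * (g y * h' y)) + 4 * (y ^ k * h' y ^ 2))
            = ((k-1) * y ^ (k-2) * g y + 2 * y ^ (k-1) * h' y) ^ 2 := by
          linear_combination (-(4 * h' y ^ 2)) * hw2
        have h5 : 0 ≤ y ^ (k-2) * ((k-1)^2 * (y ^ (k-2) * g y ^ 2)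
            + 4*(k-1) * (y ^ (k-1) * (g y * h' y)) + 4 * (y ^ k * h' y ^ 2)) := by
          rw [hUE]; exact hQ
        exact le_of_mul_le_mul_left (by simpa using h5) hu
      rw [hpsi]
      simp only [hF'def]
      rw [div_mul_eq_mul_div, div_mul_eq_mul_div, div_add_div _ _ hk1.ne'
        (pow_ne_zero 2 hk1.ne')]
      rw [le_div_iff₀ (by positivity)]
      nlinarith [hE, hk1]
    -- integrate the pointwise inequality
    have hLHSint : IntegrableOn (fun y : ℝ => ψ y / y ^ 2) (Ioc ε a) :=
      ((hφcont.mono hsubIcc).integrableOn_Icc).mono_set Ioc_subset_Icc_self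
    have hRHSint : IntegrableOn
        (fun y : ℝ => (2/(k-1)) * F' y + (4/(k-1)^2) * (y ^ k * h' y ^ 2)) (Ioc ε a) :=
      (hF'int.const_mul _).add ((hPint ε hε0).const_mul _)
    have hineq1 : (∫ y in Ioc ε a, ψ y / y ^ 2)
        ≤ ∫ y in Ioc ε a, ((2/(k-1)) * F' y + (4/(k-1)^2) * (y ^ k * h' y ^ 2)) :=
      setIntegral_mono_on hLHSint hRHSint measurableSet_Ioc hpoint
    have hsplit2 : (∫ y in Ioc ε a, ((2/(k-1)) * F' y + (4/(k-1)^2) * (y ^ k * h' y ^ 2)))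
        = (2/(k-1)) * (∫ y in Ioc ε a, F' y)
          + (4/(k-1)^2) * ∫ y in Ioc ε a, (y ^ k * h' y ^ 2) := by
      rw [integral_add (hF'int.const_mul _) ((hPint ε hε0).const_mul _),
        integral_const_mul, integral_const_mul]
    have hFε : 0 ≤ ε ^ (k-1) * g ε ^ 2 :=
      mul_nonneg (Real.rpow_nonneg hε0.le _) (sq_nonneg _)
    have hreal : (∫ y in Ioc ε a, ψ y / y ^ 2) ≤ 16*S/(k-1) + 4*D/(k-1)^2 := by
      calc (∫ y in Ioc ε a, ψ y / y ^ 2)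
          ≤ (2/(k-1)) * (∫ y in Ioc ε a, F' y)
            + (4/(k-1)^2) * ∫ y in Ioc ε a, (y ^ k * h' y ^ 2) := by
            rw [← hsplit2]; exact hineq1
        _ ≤ (2/(k-1)) * (8*S) + (4/(k-1)^2) * D := by
            apply add_le_add
            · apply mul_le_mul_of_nonneg_left _ (by positivity)
              rw [hFTC]
              linarith [hFa, hFε]
            · exact mul_le_mul_of_nonneg_left (hPle ε hε0) (by positivity)
        _ = 16*S/(k-1) + 4*D/(k-1)^2 := by ring
    -- convert to lintegral
    have hnn : 0 ≤ᵐ[volume.restrict (Ioc ε a)] fun y : ℝ => ψ y / y ^ 2 := by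
      filter_upwards [ae_restrict_mem measurableSet_Ioc] with y hy
      exact div_nonneg (hψ0 y (hsubIoc ε hε0 hy)) (sq_nonneg y)
    calc (∫⁻ y in Ioc ε a, ENNReal.ofReal (ψ y / y ^ 2))
        = ENNReal.ofReal (∫ y in Ioc ε a, ψ y / y ^ 2) :=
          (ofReal_integral_eq_lintegral_ofReal hLHSint hnn).symm
      _ ≤ ENNReal.ofReal (16*S/(k-1) + 4*D/(k-1)^2) := ENNReal.ofReal_le_ofReal hreal
  -- per-ε bound on Ioo ε 1
  have hM : ∀ ε ∈ Ioo (0:ℝ) a, (∫⁻ x in Ioo ε 1, ENNReal.ofReal (ψ x / x ^ 2))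
      ≤ ENNReal.ofReal (16*S/(k-1) + 4*D/(k-1)^2 + 4*S) := by
    intro ε hε
    have hdisj : Disjoint (Ioo ε a) (Ico a (1:ℝ)) := by
      rw [Set.disjoint_left]
      intro x hx hx'
      exact absurd hx.2 (not_lt.mpr hx'.1)
    have hsplit : Ioo ε (1:ℝ) = Ioo ε a ∪ Ico a 1 := (Ioo_union_Ico_eq_Ioo hε.2 ha1.le).symm
    have hA : (∫⁻ x in Ioo ε a, ENNReal.ofReal (ψ x / x ^ 2))
        ≤ ENNReal.ofReal (16*S/(k-1) + 4*D/(k-1)^2) := by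
      rw [Measure.restrict_congr_set Ioo_ae_eq_Ioc]
      exact keyIoc ε hε
    have hB : (∫⁻ x in Ico a 1, ENNReal.ofReal (ψ x / x ^ 2)) ≤ ENNReal.ofReal (4*S) := by
      have hsub : Ico a (1:ℝ) ⊆ Ioo (0:ℝ) 1 := fun x hx => ⟨lt_of_lt_of_le ha0 hx.1, hx.2⟩
      calc (∫⁻ x in Ico a 1, ENNReal.ofReal (ψ x / x ^ 2))
          ≤ ∫⁻ x in Ico a 1, ENNReal.ofReal 4 * ENNReal.ofReal (ψ x) := by
            apply setLIntegral_mono' measurableSet_Ico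
            intro x hx
            rw [← ENNReal.ofReal_mul (by norm_num)]
            apply ENNReal.ofReal_le_ofReal
            have hx0 : (1/2:ℝ) < x := lt_of_lt_of_le haI.1 hx.1
            have hψx := hψ0 x (hsub hx)
            rw [div_le_iff₀ (by positivity)]
            have h4 : (0:ℝ) ≤ 4*x^2 - 1 := by nlinarith [hx0]
            nlinarith [mul_nonneg hψx h4]
        _ = ENNReal.ofReal 4 * ∫⁻ x in Ico a 1, ENNReal.ofReal (ψ x) :=
            lintegral_const_mul' _ _ ENNReal.ofReal_ne_top
        _ ≤ ENNReal.ofReal 4 * ENNReal.ofReal S := by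
            apply mul_le_mul_right
            rw [← hI2eq]
            exact lintegral_mono_set hsub
        _ = ENNReal.ofReal (4*S) := (ENNReal.ofReal_mul (by norm_num)).symm
    calc (∫⁻ x in Ioo ε 1, ENNReal.ofReal (ψ x / x ^ 2))
        = (∫⁻ x in Ioo ε a, ENNReal.ofReal (ψ x / x ^ 2))
          + ∫⁻ x in Ico a 1, ENNReal.ofReal (ψ x / x ^ 2) := by
          rw [hsplit, lintegral_union measurableSet_Ico hdisj]
      _ ≤ ENNReal.ofReal (16*S/(k-1) + 4*D/(k-1)^2) + ENNReal.ofReal (4*S) :=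
          add_le_add hA hB
      _ = ENNReal.ofReal (16*S/(k-1) + 4*D/(k-1)^2 + 4*S) := by
          rw [← ENNReal.ofReal_add (by positivity) (by positivity)]
  -- monotone limit ε → 0
  set e : ℕ → ℝ := fun n => a / (n+2) with hedef
  have he_mem : ∀ n : ℕ, e n ∈ Ioo (0:ℝ) a := by
    intro n
    constructor
    · positivity
    · rw [hedef]
      rw [div_lt_iff₀ (by positivity)]
      nlinarith [ha0, (Nat.cast_nonneg n : (0:ℝ) ≤ n)]
  have he_anti : ∀ m n : ℕ, m ≤ n → e n ≤ e m := by
    intro m n h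
    apply div_le_div_of_nonneg_left ha0.le (by positivity)
    have : (m:ℝ) ≤ n := Nat.cast_le.mpr h
    linarith
  set φ : ℝ → ℝ≥0∞ := fun x => ENNReal.ofReal (ψ x / x ^ 2) with hφdef
  set f : ℕ → ℝ → ℝ≥0∞ := fun n => (Ioi (e n)).indicator φ with hfdef
  have hfmeas : ∀ n, AEMeasurable (f n) (volume.restrict (Ioo (0:ℝ) 1)) := fun n =>
    hφmeas.indicator measurableSet_Ioi
  have hfmono : ∀ x, Monotone fun n => f n x := by
    intro x m n hmn
    exact Set.indicator_le_indicator_of_subset (Ioi_subset_Ioi (he_anti m n hmn))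
      (fun _ => zero_le) x
  have hsup : ∀ᵐ x ∂(volume.restrict (Ioo (0:ℝ) 1)), (⨆ n, f n x) = φ x := by
    filter_upwards [ae_restrict_mem measurableSet_Ioo] with x hx
    obtain ⟨n, hn⟩ : ∃ n : ℕ, e n < x := by
      obtain ⟨n, hn⟩ := exists_nat_gt (a / x)
      refine ⟨n, ?_⟩
      rw [hedef]
      rw [div_lt_iff₀ (by positivity)]
      rw [div_lt_iff₀ hx.1] at hn
      nlinarith [hx.1]
    apply le_antisymm
    · exact iSup_le fun m => Set.indicator_le_self' (fun _ _ => zero_le) x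
    · calc φ x = f n x := (Set.indicator_of_mem hn φ).symm
        _ ≤ ⨆ m, f m x := le_iSup (fun m => f m x) n
  have hkey : (∫⁻ x in Ioo (0:ℝ) 1, φ x) = ⨆ n, ∫⁻ x in Ioo (0:ℝ) 1, f n x := by
    rw [← lintegral_iSup' hfmeas (ae_of_all _ hfmono)]
    exact lintegral_congr_ae (hsup.mono fun x h => h.symm)
  have hfn : ∀ n, (∫⁻ x in Ioo (0:ℝ) 1, f n x) = ∫⁻ x in Ioo (e n) 1, φ x := by
    intro n
    have hset : Ioi (e n) ∩ Ioo (0:ℝ) 1 = Ioo (e n) 1 := by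
      ext x
      simp only [mem_inter_iff, mem_Ioi, mem_Ioo]
      constructor
      · rintro ⟨h1, _, h3⟩
        exact ⟨h1, h3⟩
      · rintro ⟨h1, h2⟩
        exact ⟨h1, (he_mem n).1.trans h1, h2⟩
    rw [hfdef]
    rw [lintegral_indicator measurableSet_Ioi, Measure.restrict_restrict measurableSet_Ioi, hset]
  have hfinal : (∫⁻ x in Ioo (0:ℝ) 1, ENNReal.ofReal (ψ x / x ^ 2))
      ≤ ENNReal.ofReal (16*S/(k-1) + 4*D/(k-1)^2 + 4*S) := by
    rw [show (∫⁻ x in Ioo (0:ℝ) 1, ENNReal.ofReal (ψ x / x ^ 2))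
        = ∫⁻ x in Ioo (0:ℝ) 1, φ x from rfl, hkey]
    apply iSup_le
    intro n
    rw [hfn n]
    exact hM (e n) (he_mem n)
  have hCord : 16*S/(k-1) + 4*D/(k-1)^2 + 4*S ≤ Cr * (D + S) := by
    rw [hCrdef]
    have hi : (0:ℝ) ≤ (k-1)⁻¹ := by positivity
    have hj : (0:ℝ) ≤ ((k-1)^2)⁻¹ := by positivity
    have e1 : 16*S/(k-1) = 16 * (k-1)⁻¹ * S := by ring
    have e2 : 4*D/(k-1)^2 = 4 * ((k-1)^2)⁻¹ * D := by ring
    have e3 : (16 / (k-1) + 4 / (k-1)^2 + 4) * (D + S)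
        = 16*(k-1)⁻¹*D + 16*(k-1)⁻¹*S + 4*((k-1)^2)⁻¹*D + 4*((k-1)^2)⁻¹*S + 4*D + 4*S := by
      ring
    rw [e1, e2, e3]
    nlinarith [mul_nonneg hi hD0, mul_nonneg hj hSpos.le, mul_nonneg hj hD0, hD0]
  calc (∫⁻ x in Ioo (0:ℝ) 1, ENNReal.ofReal (ψ x / x ^ 2))
      ≤ ENNReal.ofReal (16*S/(k-1) + 4*D/(k-1)^2 + 4*S) := hfinal
    _ ≤ ENNReal.ofReal (Cr * (D + S)) := ENNReal.ofReal_le_ofReal hCord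
    _ = (Real.toNNReal Cr : ℝ≥0∞)
        * ((∫⁻ x in Ioo (0:ℝ) 1, ENNReal.ofReal (x ^ k * (h' x) ^ 2))
          + ∫⁻ x in Ioo (0:ℝ) 1, ENNReal.ofReal (ψ x)) := by
        rw [hI1eq, hI2eq, ← ENNReal.ofReal_add hD0 hSpos.le,
          ENNReal.ofReal_mul hCrpos.le]
        rfl
end

section
/- For k > 0 and r > 0, one has sup_{0<r<1/2} ( ∫₀^r x^k dx )^{1/q} ( ∫_r^{1/2} x^{−k} dx )^{1/2} < ∞ whenever q < ∞ if k ≤ 1, and whenever q ≤ 2(k+1)/(k−1) if k > 1. -/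
open MeasureTheory Set intervalIntegral Real

lemma int1' (k r : ℝ) (hk : 0 < k) (hr : 0 ≤ r) :
    ∫ x in Ioo (0:ℝ) r, x ^ k = r ^ (k+1) / (k+1) := by
  rw [← MeasureTheory.integral_Ioc_eq_integral_Ioo, ← intervalIntegral.integral_of_le hr,
    integral_rpow (Or.inl (by linarith))]
  rw [Real.zero_rpow (by linarith)]
  ring

lemma int2' (k r : ℝ) (hk1 : k ≠ 1) (hr : 0 < r) (hr2 : r ≤ 1/2) :
    ∫ x in Ioo r (1/2:ℝ), x ^ (-k) = ((1/2:ℝ) ^ (-k+1) - r ^ (-k+1)) / (-k+1) := by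
  rw [← MeasureTheory.integral_Ioc_eq_integral_Ioo, ← intervalIntegral.integral_of_le hr2,
    integral_rpow (Or.inr ⟨by intro h; exact hk1 (by linarith),
      notMem_uIcc_of_lt hr (by norm_num)⟩)]

lemma int3' (r : ℝ) (hr : 0 < r) (hr2 : r ≤ 1/2) :
    ∫ x in Ioo r (1/2:ℝ), x ^ (-(1:ℝ)) = Real.log ((1/2)/r) := by
  rw [← MeasureTheory.integral_Ioc_eq_integral_Ioo, ← intervalIntegral.integral_of_le hr2]
  simp_rw [Real.rpow_neg_one]
  rw [integral_inv (notMem_uIcc_of_lt hr (by norm_num))]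

theorem muckenhoupt_condition (k : ℝ) (hk : 0 < k) (q : ℝ) (hq : 0 < q)
    (hkq : 1 < k → q ≤ 2 * (k + 1) / (k - 1)) :
    ∃ M : ℝ, ∀ r ∈ Ioo (0:ℝ) (1/2),
      (∫ x in Ioo (0:ℝ) r, x ^ k) ^ (1/q) *
        (∫ x in Ioo r (1/2 : ℝ), x ^ (-k)) ^ ((1:ℝ)/2) ≤ M := by
  rcases lt_trichotomy k 1 with hk1 | hk1 | hk1
  · -- k < 1
    refine ⟨((1/2:ℝ)^(k+1)/(k+1))^(1/q) * (((1/2:ℝ)^(-k+1))/(-k+1))^((1:ℝ)/2), ?_⟩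
    rintro r ⟨hr0, hr2⟩
    rw [int1' k r hk hr0.le, int2' k r (ne_of_lt hk1) hr0 hr2.le]
    have hA0 : 0 ≤ r^(k+1)/(k+1) := by positivity
    have hrle : r ^ (-k+1) ≤ (1/2:ℝ) ^ (-k+1) :=
      Real.rpow_le_rpow hr0.le hr2.le (by linarith)
    have hB0 : 0 ≤ ((1/2:ℝ)^(-k+1) - r^(-k+1))/(-k+1) :=
      div_nonneg (sub_nonneg.2 hrle) (by linarith)
    have hA : r^(k+1)/(k+1) ≤ (1/2:ℝ)^(k+1)/(k+1) := by
      gcongr <;> linarith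
    have hB : ((1/2:ℝ)^(-k+1) - r^(-k+1))/(-k+1) ≤ ((1/2:ℝ)^(-k+1))/(-k+1) := by
      gcongr
      · linarith
      · have : 0 ≤ r ^ (-k+1) := Real.rpow_nonneg hr0.le _
        linarith
    exact mul_le_mul (Real.rpow_le_rpow hA0 hA (by positivity))
      (Real.rpow_le_rpow hB0 hB (by positivity)) (Real.rpow_nonneg hB0 _)
      (Real.rpow_nonneg (by positivity) _)
  · -- k = 1
    subst hk1
    refine ⟨(q/2)^((1:ℝ)/2), ?_⟩
    rintro r ⟨hr0, hr2⟩
    rw [int1' 1 r one_pos hr0.le, int3' r hr0 hr2.le]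
    have hx0 : (0:ℝ) ≤ (1/2)/r := by positivity
    have hlog0 : 0 ≤ Real.log ((1/2)/r) :=
      Real.log_nonneg ((one_le_div hr0).2 hr2.le)
    have hlog : Real.log ((1/2)/r) ≤ (q/2) * ((1/2)/r) ^ (2/q) := by
      have h := Real.log_le_rpow_div hx0 (show (0:ℝ) < 2/q by positivity)
      calc Real.log ((1/2)/r) ≤ ((1/2)/r) ^ (2/q) / (2/q) := h
        _ = (q/2) * ((1/2)/r) ^ (2/q) := by field_simp
    calc (r^((1:ℝ)+1)/((1:ℝ)+1))^(1/q) * Real.log ((1/2)/r) ^ ((1:ℝ)/2)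
        = (r^((1:ℝ)+1)/2)^(1/q) * Real.log ((1/2)/r) ^ ((1:ℝ)/2) := by norm_num
      _ ≤ (r^((1:ℝ)+1)/2)^(1/q) * ((q/2) * ((1/2)/r) ^ (2/q)) ^ ((1:ℝ)/2) := by
          gcongr
      _ = (q/2)^((1:ℝ)/2) * ((r^((1:ℝ)+1)/2)^(1/q) * (((1/2)/r) ^ (2/q)) ^ ((1:ℝ)/2)) := by
          rw [Real.mul_rpow (by positivity) (by positivity)]; ring
      _ = (q/2)^((1:ℝ)/2) * ((r^((1:ℝ)+1)/2) * ((1/2)/r)) ^ (1/q) := by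
          rw [← Real.rpow_mul hx0, show (2/q)*((1:ℝ)/2) = 1/q by ring,
            ← Real.mul_rpow (by positivity) (by positivity)]
      _ = (q/2)^((1:ℝ)/2) * (r/4) ^ (1/q) := by
          congr 1
          congr 1
          rw [show ((1:ℝ)+1) = (2:ℕ) by norm_num, Real.rpow_natCast]
          field_simp
          ring
      _ ≤ (q/2)^((1:ℝ)/2) * 1 :=
          mul_le_mul_of_nonneg_left
            (Real.rpow_le_one (by positivity) (by linarith) (by positivity))
            (Real.rpow_nonneg (by positivity) _)
      _ = (q/2)^((1:ℝ)/2) := mul_one _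
  · -- k > 1
    refine ⟨((k+1:ℝ)^(1/q))⁻¹ * ((k-1:ℝ)^((1:ℝ)/2))⁻¹, ?_⟩
    rintro r ⟨hr0, hr2⟩
    rw [int1' k r hk hr0.le, int2' k r (ne_of_gt hk1) hr0 hr2.le]
    have hk1' : (0:ℝ) < k - 1 := by linarith
    have heq : ((1/2:ℝ)^(-k+1) - r^(-k+1))/(-k+1) = (r^(-k+1) - (1/2:ℝ)^(-k+1))/(k-1) := by
      rw [div_eq_div_iff (by linarith) (by linarith)]; ring
    have hrle : (1/2:ℝ) ^ (-k+1) ≤ r ^ (-k+1) :=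
      Real.rpow_le_rpow_of_nonpos hr0 hr2.le (by linarith)
    have hB0 : 0 ≤ ((1/2:ℝ)^(-k+1) - r^(-k+1))/(-k+1) := by
      rw [heq]; exact div_nonneg (sub_nonneg.2 hrle) hk1'.le
    have hB : ((1/2:ℝ)^(-k+1) - r^(-k+1))/(-k+1) ≤ r^(-k+1)/(k-1) := by
      rw [heq]
      gcongr
      have : 0 ≤ (1/2:ℝ) ^ (-k+1) := Real.rpow_nonneg (by norm_num) _
      linarith
    have hα : 0 ≤ (k+1)*(1/q) + (-k+1)*((1:ℝ)/2) := by
      have h1 := (le_div_iff₀ hk1').mp (hkq hk1)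
      have h2 : (k+1)*(1/q) + (-k+1)*((1:ℝ)/2) = (2*(k+1) - q*(k-1))/(2*q) := by
        field_simp; ring
      rw [h2]
      exact div_nonneg (by linarith) (by linarith)
    calc (r^(k+1)/(k+1))^(1/q) * (((1/2:ℝ)^(-k+1) - r^(-k+1))/(-k+1))^((1:ℝ)/2)
        ≤ (r^(k+1)/(k+1))^(1/q) * (r^(-k+1)/(k-1))^((1:ℝ)/2) := by
          gcongr
      _ = r^((k+1)*(1/q) + (-k+1)*((1:ℝ)/2)) * (((k+1:ℝ)^(1/q))⁻¹ * ((k-1:ℝ)^((1:ℝ)/2))⁻¹) := by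
          rw [Real.div_rpow (by positivity) (by positivity),
            Real.div_rpow (Real.rpow_nonneg hr0.le _) hk1'.le,
            ← Real.rpow_mul hr0.le, ← Real.rpow_mul hr0.le,
            Real.rpow_add hr0]
          ring
      _ ≤ 1 * (((k+1:ℝ)^(1/q))⁻¹ * ((k-1:ℝ)^((1:ℝ)/2))⁻¹) :=
          mul_le_mul_of_nonneg_right
            (Real.rpow_le_one hr0.le (by linarith) hα) (by positivity)
      _ = ((k+1:ℝ)^(1/q))⁻¹ * ((k-1:ℝ)^((1:ℝ)/2))⁻¹ := one_mul _
end

section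
/- There exists λ₀ > 1 such that for all λ ≥ λ₀ and all ε ≥ 0, 1 + ε + 1/(1+ε) + 2 − 2√(1 + log(1+ε)/log λ) − 2/√(1 + log(1+ε)/log λ) ≥ 0. -/
theorem one_eps_inequality :
    ∃ lam₀ : ℝ, 1 < lam₀ ∧ ∀ lam : ℝ, lam₀ ≤ lam → ∀ ε : ℝ, 0 ≤ ε →
      0 ≤ 1 + ε + 1/(1 + ε) + 2 -
        2 * Real.sqrt (1 + Real.log (1 + ε) / Real.log lam) -
        2 / Real.sqrt (1 + Real.log (1 + ε) / Real.log lam) := by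
  refine ⟨Real.exp 1, by nlinarith [Real.add_one_le_exp (1:ℝ)], fun lam hlam ε hε => ?_⟩
  have hL : 1 ≤ Real.log lam := by
    calc 1 = Real.log (Real.exp 1) := (Real.log_exp 1).symm
    _ ≤ Real.log lam := Real.log_le_log (Real.exp_pos 1) hlam
  have hT0 : (0:ℝ) < 1 + ε := by linarith
  have hlog : 0 ≤ Real.log (1 + ε) := Real.log_nonneg (by linarith)
  have hlogle : Real.log (1 + ε) ≤ ε := by
    nlinarith [Real.log_le_sub_one_of_pos hT0]
  have hq0 : 0 ≤ Real.log (1 + ε) / Real.log lam := by positivity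
  have hq1 : Real.log (1 + ε) / Real.log lam ≤ ε := by
    calc Real.log (1 + ε) / Real.log lam ≤ Real.log (1 + ε) / 1 := by
          apply div_le_div_of_nonneg_left hlog (by linarith) hL
    _ ≤ ε := by simpa using hlogle
  set S := Real.sqrt (1 + Real.log (1 + ε) / Real.log lam) with hS
  have hS1 : 1 ≤ S := by
    have := Real.sqrt_le_sqrt (show (1:ℝ) ≤ 1 + Real.log (1 + ε) / Real.log lam by linarith)
    simpa [hS] using this
  have hS0 : 0 < S := by linarith
  have hSsq : S ^ 2 ≤ 1 + ε := by
    rw [hS, sq, Real.mul_self_sqrt (by linarith)]; linarith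
  have key : 0 ≤ (1+ε)^2*S + S + 2*(1+ε)*S - 2*(1+ε)*S^2 - 2*(1+ε) := by
    have hd : 0 ≤ 1 + ε - S ^ 2 := by linarith
    have h1 : 0 ≤ S * (S - 1) ^ 2 * (S ^ 2 + 1) := by positivity
    have h2 : 0 ≤ 2 * ((1 + ε - S ^ 2) * ((S - 1) * (S ^ 2 + 1))) := by
      apply mul_nonneg (by norm_num)
      exact mul_nonneg hd (mul_nonneg (by linarith) (by positivity))
    have h3 : 0 ≤ (1 + ε - S ^ 2) ^ 2 * S := by positivity
    nlinarith [h1, h2, h3]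
  have heq : 1 + ε + 1/(1 + ε) + 2 - 2 * S - 2 / S
      = ((1+ε)^2*S + S + 2*(1+ε)*S - 2*(1+ε)*S^2 - 2*(1+ε)) / ((1+ε)*S) := by
    field_simp
  rw [heq]
  exact div_nonneg key (by positivity)
end
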